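/- The three-qubit orthogonal product basis M₃₁ = {|0,0,0⟩, |a,1,0⟩, |a',1,0⟩, |0,b,1⟩, |0,b',1⟩, |1,0,c⟩, |1,0,c'⟩, |1,1,1⟩}, where {|a⟩,|a'⟩}, {|b⟩,|b'⟩}, {|c⟩,|c'⟩} are orthonormal bases of ℂ² none of whose members is |0⟩ or |1⟩, cannot be perfectly distinguished by any LOCC protocol: the first nontrivial local measurement operator, on any party, must satisfy that its POVM element is proportional to the identity, hence no party can gain information without disturbing orthogonality. -/

import Mathlib

/-!
Let `G = A†A`. For each party, `M₃₁` contains two states that differ there as `|0⟩` versus `|1⟩`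
and overlap nontrivially on the other two parties (for the first party: `|0,0,0⟩` and
`|1,0,c⟩`, with `⟨0|c⟩ ≠ 0`); hence `G₀₁ = 0`, and `G` is diagonal because it is Hermitian.
The same party also carries an orthonormal pair `{v, v'}` (there: `|a,1,0⟩`, `|a',1,0⟩`), and
`0 = ⟨v|G|v'⟩ = conj(v₀) v'₀ (G₀₀ - G₁₁)` with `v₀ v'₀ ≠ 0` forces `G₀₀ = G₁₁`.
-/

open scoped ComplexInnerProductSpace Matrix
noncomputable section
/-- A qubit state space `ℂ²`. -/
abbrev Qubit := EuclideanSpace ℂ (Fin 2)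
/-- The standard basis vector `|0⟩`. -/
def e0 : Qubit := EuclideanSpace.single 0 1
/-- The standard basis vector `|1⟩`. -/
def e1 : Qubit := EuclideanSpace.single 1 1
/-- `OB a a'` means `{a, a'}` is an orthonormal basis of `ℂ²`. -/
def OB (a a' : Qubit) : Prop := ⟪a, a⟫ = 1 ∧ ⟪a', a'⟫ = 1 ∧ ⟪a, a'⟫ = 0
/-- The two-qubit product state `a ⊗ b`. -/
def prod2 (a b : Qubit) : EuclideanSpace ℂ (Fin 2 × Fin 2) := WithLp.toLp 2 (fun p => a p.1 * b p.2)
/-- The three-qubit product state `a ⊗ b ⊗ c`. -/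
def prod3 (a b c : Qubit) : EuclideanSpace ℂ (Fin 2 × Fin 2 × Fin 2) :=
  WithLp.toLp 2 (fun p => a p.1 * b p.2.1 * c p.2.2)
/-- The four-qubit product state `a ⊗ b ⊗ c ⊗ d`. -/
def prod4 (a b c d : Qubit) : EuclideanSpace ℂ (Fin 2 × Fin 2 × Fin 2 × Fin 2) :=
  WithLp.toLp 2 (fun p => a p.1 * b p.2.1 * c p.2.2.1 * d p.2.2.2)
/-- Apply a `2 × 2` matrix to a qubit state. -/
def appM (A : Matrix (Fin 2) (Fin 2) ℂ) (v : Qubit) : Qubit := WithLp.toLp 2 (fun i => ∑ j, A i j * v j)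

/-- Apply a one-qubit operator `A` to party `p` of a three-qubit state. -/
def actP (p : Fin 3) (A : Matrix (Fin 2) (Fin 2) ℂ)
    (w : EuclideanSpace ℂ (Fin 2 × Fin 2 × Fin 2)) :
    EuclideanSpace ℂ (Fin 2 × Fin 2 × Fin 2) :=
  match p with
  | 0 => WithLp.toLp 2 (fun q => ∑ y, A q.1 y * w (y, q.2))
  | 1 => WithLp.toLp 2 (fun q => ∑ y, A q.2.1 y * w (q.1, y, q.2.2))
  | 2 => WithLp.toLp 2 (fun q => ∑ y, A q.2.2 y * w (q.1, q.2.1, y))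

/-- The three-qubit OPB `M₃₁`. -/
def M31 (a a' b b' c c' : Qubit) : Fin 8 → EuclideanSpace ℂ (Fin 2 × Fin 2 × Fin 2) :=
  ![prod3 e0 e0 e0, prod3 a e1 e0, prod3 a' e1 e0, prod3 e0 b e1,
    prod3 e0 b' e1, prod3 e1 e0 c, prod3 e1 e0 c', prod3 e1 e1 e1]

@[simp] lemma inner_e0 (v : Qubit) : ⟪e0, v⟫ = v 0 := by
  simp [PiLp.inner_apply, e0]

@[simp] lemma e0_ne_zero : e0 ≠ 0 := by
  simp [e0]

@[simp] lemma e1_ne_zero : e1 ≠ 0 := by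
  simp [e1]

lemma inner_appM_appM (A : Matrix (Fin 2) (Fin 2) ℂ) (u v : Qubit) :
    ⟪appM A u, appM A v⟫ = ∑ i, ∑ j, star (u i) * (Aᴴ * A) i j * v j := by
  simp only [appM, PiLp.inner_apply, RCLike.inner_apply, RCLike.star_def, Matrix.mul_apply,
    Matrix.conjTranspose_apply, Fin.sum_univ_two, map_add, map_mul]
  ring

@[simp] lemma inner_appM_e0_appM_e1 (A : Matrix (Fin 2) (Fin 2) ℂ) :
    ⟪appM A e0, appM A e1⟫ = (Aᴴ * A) 0 1 := by
  simp [inner_appM_appM, e0, e1]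

lemma inner_actP_zero (A : Matrix (Fin 2) (Fin 2) ℂ) (x y z x' y' z' : Qubit) :
    ⟪actP 0 A (prod3 x y z), actP 0 A (prod3 x' y' z')⟫ =
      ⟪appM A x, appM A x'⟫ * ⟪y, y'⟫ * ⟪z, z'⟫ := by
  simp only [actP, prod3, appM, PiLp.inner_apply, RCLike.inner_apply, Fintype.sum_prod_type,
    Fin.sum_univ_two, map_add, map_mul]
  ring

lemma inner_actP_one (A : Matrix (Fin 2) (Fin 2) ℂ) (x y z x' y' z' : Qubit) :
    ⟪actP 1 A (prod3 x y z), actP 1 A (prod3 x' y' z')⟫ =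
      ⟪x, x'⟫ * ⟪appM A y, appM A y'⟫ * ⟪z, z'⟫ := by
  simp only [actP, prod3, appM, PiLp.inner_apply, RCLike.inner_apply, Fintype.sum_prod_type,
    Fin.sum_univ_two, map_add, map_mul]
  ring

lemma inner_actP_two (A : Matrix (Fin 2) (Fin 2) ℂ) (x y z x' y' z' : Qubit) :
    ⟪actP 2 A (prod3 x y z), actP 2 A (prod3 x' y' z')⟫ =
      ⟪x, x'⟫ * ⟪y, y'⟫ * ⟪appM A z, appM A z'⟫ := by
  simp only [actP, prod3, appM, PiLp.inner_apply, RCLike.inner_apply, Fintype.sum_prod_type,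
    Fin.sum_univ_two, map_add, map_mul]
  ring

lemma conjTranspose_mul_self_eq_smul_one_of_orthogonal {A : Matrix (Fin 2) (Fin 2) ℂ}
    {v v' : Qubit} (h01 : (Aᴴ * A) 0 1 = 0) (horth : ⟪v, v'⟫ = 0)
    (hA : ⟪appM A v, appM A v'⟫ = 0) (hv : v 0 ≠ 0) (hv' : v' 0 ≠ 0) :
    Aᴴ * A = (Aᴴ * A) 0 0 • (1 : Matrix (Fin 2) (Fin 2) ℂ) := by
  have h10 : (Aᴴ * A) 1 0 = 0 := by
    rw [← (Matrix.isHermitian_conjTranspose_mul_self A).apply, h01, star_zero]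
  have hdot : star (v 0) * v' 0 + star (v 1) * v' 1 = 0 := by
    simpa [PiLp.inner_apply, Fin.sum_univ_two, mul_comm] using horth
  simp only [inner_appM_appM, Fin.sum_univ_two, h01, h10] at hA
  have hdiag : star (v 0) * v' 0 * ((Aᴴ * A) 0 0 - (Aᴴ * A) 1 1) = 0 := by
    linear_combination hA - (Aᴴ * A) 1 1 * hdot
  have h11 : (Aᴴ * A) 1 1 = (Aᴴ * A) 0 0 := by
    linear_combination -(mul_eq_zero.1 hdiag).resolve_left (mul_ne_zero (star_ne_zero.2 hv) hv')
  rw [Matrix.eta_fin_two (Aᴴ * A), h01, h10, h11]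
  ext i j
  fin_cases i <;> fin_cases j <;> simp

/-- For the three-qubit OPB `M₃₁` with none of `a,a',b,b',c,c'` equal to
`|0⟩` or `|1⟩`, any local measurement operator `A` on any of the three parties that
keeps the eight states pairwise orthogonal must have `A†A` proportional to the
identity; hence `M₃₁` cannot be perfectly distinguished by LOCC (no party can gain
information without disturbing orthogonality). -/
theorem M31_locally_indistinguishable
    (a a' b b' c c' : Qubit) (ha : OB a a') (hb : OB b b') (hc : OB c c')
    (hne : ∀ v ∈ ({a, a', b, b', c, c'} : Set Qubit), ⟪e0, v⟫ ≠ 0 ∧ ⟪e1, v⟫ ≠ 0) :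
    ∀ (p : Fin 3) (A : Matrix (Fin 2) (Fin 2) ℂ),
      (∀ j k : Fin 8, j ≠ k →
        ⟪actP p A (M31 a a' b b' c c' j), actP p A (M31 a a' b b' c c' k)⟫ = 0) →
      ∃ κ : ℂ, Aᴴ * A = κ • (1 : Matrix (Fin 2) (Fin 2) ℂ) := by
  have h0 : ∀ v ∈ ({a, a', b, b', c, c'} : Set Qubit), v 0 ≠ 0 := fun v hv => by
    simpa using (hne v hv).1
  intro p A h
  refine ⟨(Aᴴ * A) 0 0, ?_⟩
  fin_cases p
  · have h05 : (Aᴴ * A) 0 1 = 0 := by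
      simpa [M31, inner_actP_zero, h0 c (by simp)] using h 0 5 (by decide)
    have h12 : ⟪appM A a, appM A a'⟫ = 0 := by
      simpa [M31, inner_actP_zero] using h 1 2 (by decide)
    exact conjTranspose_mul_self_eq_smul_one_of_orthogonal h05 ha.2.2 h12
      (h0 a (by simp)) (h0 a' (by simp))
  · have h01 : (Aᴴ * A) 0 1 = 0 := by
      simpa [M31, inner_actP_one, h0 a (by simp)] using h 0 1 (by decide)
    have h34 : ⟪appM A b, appM A b'⟫ = 0 := by
      simpa [M31, inner_actP_one] using h 3 4 (by decide)
    exact conjTranspose_mul_self_eq_smul_one_of_orthogonal h01 hb.2.2 h34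
      (h0 b (by simp)) (h0 b' (by simp))
  · have h03 : (Aᴴ * A) 0 1 = 0 := by
      simpa [M31, inner_actP_two, h0 b (by simp)] using h 0 3 (by decide)
    have h56 : ⟪appM A c, appM A c'⟫ = 0 := by
      simpa [M31, inner_actP_two] using h 5 6 (by decide)
    exact conjTranspose_mul_self_eq_smul_one_of_orthogonal h03 hc.2.2 h56
      (h0 c (by simp)) (h0 c' (by simp))
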